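/- arXiv:0812.4113 — 2 statements merged into one kernel-verified Lean document; each statement's English description precedes it below -/
import Mathlib

section
/- Let 1 < j < m ≤ n and set x_j^{(m)} = (ω−1)/2 + Σ_{r=1}^{j−1}(s_{rm} − e_{rm}) ∈ B_n(ω). Then x_j^{(m)} e_{jm} = (ω − 1 − x_j) e_{jm}, where x_j = (ω−1)/2 + Σ_{r=1}^{j−1}(s_{rj} − e_{rj}) is the Jucys–Murphy element. -/
/-!
Common definitions for the fusion procedure for the Brauer algebra
(Isaev–Molev, "Fusion procedure for the Brauer algebra").
-/

noncomputable section
open scoped BigOperators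
open Classical

namespace BrauerFusion

/-- The base field `F = ℂ(ω)`. -/
abbrev F : Type := RatFunc ℂ

/-- The indeterminate `ω ∈ ℂ(ω)`. -/
def ωF : F := RatFunc.X

/-- `s e : ℕ → A` satisfy the defining relations of the Brauer algebra `B_n(ω)`
over the commutative base `R`; here `s i`, `e i` represent the generators
`s_i`, `e_i` for `1 ≤ i ≤ n - 1` (values at other indices are irrelevant). -/
structure IsBrauer {R : Type*} {A : Type*} [CommRing R] [Ring A] [Algebra R A]
    (n : ℕ) (ω : R) (s e : ℕ → A) : Prop where
  ss : ∀ i, 1 ≤ i → i + 1 ≤ n → s i * s i = 1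
  ee : ∀ i, 1 ≤ i → i + 1 ≤ n → e i * e i = ω • e i
  se : ∀ i, 1 ≤ i → i + 1 ≤ n → s i * e i = e i
  es : ∀ i, 1 ≤ i → i + 1 ≤ n → e i * s i = e i
  ss_comm : ∀ i j, 1 ≤ i → j + 1 ≤ n → i + 1 < j → s i * s j = s j * s i
  ee_comm : ∀ i j, 1 ≤ i → j + 1 ≤ n → i + 1 < j → e i * e j = e j * e i
  se_comm : ∀ i j, 1 ≤ i → j + 1 ≤ n → i + 1 < j → s i * e j = e j * s i
  es_comm : ∀ i j, 1 ≤ i → j + 1 ≤ n → i + 1 < j → s j * e i = e i * s j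
  braid : ∀ i, 1 ≤ i → i + 2 ≤ n → s i * s (i+1) * s i = s (i+1) * s i * s (i+1)
  eee₁ : ∀ i, 1 ≤ i → i + 2 ≤ n → e i * e (i+1) * e i = e i
  eee₂ : ∀ i, 1 ≤ i → i + 2 ≤ n → e (i+1) * e i * e (i+1) = e (i+1)
  see : ∀ i, 1 ≤ i → i + 2 ≤ n → s i * e (i+1) * e i = s (i+1) * e i
  ees : ∀ i, 1 ≤ i → i + 2 ≤ n → e (i+1) * e i * s (i+1) = e (i+1) * s i

variable {A : Type*} [Ring A]

/-- The transposition `s_{ij} = s_i s_{i+1} ⋯ s_{j-2} s_{j-1} s_{j-2} ⋯ s_{i+1} s_i`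
(for `i < j`), defined by `s_{i,i+1} = s_i` and `s_{ij} = s_i s_{i+1,j} s_i`. -/
def sij (s : ℕ → A) (i j : ℕ) : A :=
  if h : i + 1 < j then s i * sij s (i+1) j * s i else s i
termination_by j - i
decreasing_by omega

/-- The element `e_{ij} = s_{i,j-1} e_{j-1} s_{i,j-1}` (for `i < j`), with `e_{i,i+1} = e_i`. -/
def eij (s e : ℕ → A) (i j : ℕ) : A :=
  if i + 1 < j then sij s i (j-1) * e (j-1) * sij s i (j-1) else e i

/-- `x_j^{(m)} = (ω-1)/2 + ∑_{r=1}^{j-1} (s_{rm} - e_{rm})`. -/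
def jmM {R : Type*} [Field R] [Algebra R A] (ω : R) (s e : ℕ → A) (j m : ℕ) : A :=
  algebraMap R A ((ω - 1) / 2) + ∑ r ∈ Finset.Icc 1 (j-1), (sij s r m - eij s e r m)

/-- The Jucys–Murphy element `x_r = (ω-1)/2 + ∑_{k=1}^{r-1} (s_{kr} - e_{kr})`. -/
def jm {R : Type*} [Field R] [Algebra R A] (ω : R) (s e : ℕ → A) (r : ℕ) : A :=
  jmM ω s e r r

/-- The pairs `(i, j)` with `1 ≤ i < j ≤ n` in lexicographic order. -/
def lexPairs (n : ℕ) : List (ℕ × ℕ) :=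
  (List.range' 1 n).flatMap fun i =>
    ((List.range' 1 n).filter fun j => decide (i < j)).map fun j => (i, j)

/-- The rational function
`Ψ(u_1,…,u_n) = ∏_{1≤i<j≤n} (1 - e_{ij}/(u_i+u_j)) ∏_{1≤i<j≤n} (1 - s_{ij}/(u_i-u_j))`,
with ordered products over the pairs `(i,j)` in lexicographic order. -/
def Psi {K : Type*} [Field K] [Algebra K A] (s e : ℕ → A) (n : ℕ) (u : ℕ → K) : A :=
  ((lexPairs n).map fun p => 1 - (u p.1 + u p.2)⁻¹ • eij s e p.1 p.2).prod *
  ((lexPairs n).map fun p => 1 - (u p.1 - u p.2)⁻¹ • sij s p.1 p.2).prod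

/-- An updown tableau of length `n`: a sequence of Young diagrams
`Λ_0 = ∅, Λ_1, …, Λ_n` in which `Λ_r` is obtained from `Λ_{r-1}` by adding
(`add r = true`) or removing (`add r = false`) the box `box r`. -/
structure UpDownTableau (n : ℕ) where
  shape : ℕ → YoungDiagram
  box : ℕ → ℕ × ℕ
  add : ℕ → Bool
  shape_zero : shape 0 = ⊥
  step_add : ∀ r, 1 ≤ r → r ≤ n → add r = true →
    box r ∉ shape (r-1) ∧ (shape r).cells = insert (box r) (shape (r-1)).cells
  step_rem : ∀ r, 1 ≤ r → r ≤ n → add r = false →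
    box r ∉ shape r ∧ (shape (r-1)).cells = insert (box r) (shape r).cells

/-- The content `c_r` of an updown tableau: `(ω-1)/2 + j - i` if the box `(i,j)` was
added at step `r`, and `-((ω-1)/2 + j - i)` if it was removed. -/
def content {R : Type*} [Field R] (ω : R) {n : ℕ} (T : UpDownTableau n) (r : ℕ) : R :=
  if T.add r then (ω - 1) / 2 + ((T.box r).2 : R) - ((T.box r).1 : R)
  else -((ω - 1) / 2 + ((T.box r).2 : R) - ((T.box r).1 : R))

/-- The content attached to a box `b` which can be removed from (`b ∈ μ`) or
added to (`b ∉ μ`) the diagram `μ`. -/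
def boxContent {R : Type*} [Field R] (ω : R) (μ : YoungDiagram) (b : ℕ × ℕ) : R :=
  if b ∈ μ then -((ω - 1) / 2 + (b.2 : R) - (b.1 : R))
  else (ω - 1) / 2 + (b.2 : R) - (b.1 : R)

/-- All boxes `(i,j)` with `i, j < N`, listed in lexicographic order. -/
def gridList (N : ℕ) : List (ℕ × ℕ) :=
  (List.range N).flatMap fun i => (List.range N).map fun j => (i, j)

/-- A box which can be added to, or removed from, the Young diagram `μ`
so that the result is again a Young diagram. -/
def isCandidate (μ : YoungDiagram) (b : ℕ × ℕ) : Prop :=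
  (b ∉ μ ∧ ∃ ν : YoungDiagram, ν.cells = insert b μ.cells) ∨
  (b ∈ μ ∧ ∃ ν : YoungDiagram, μ.cells = insert b ν.cells)

/-- The list of all boxes which can be added to or removed from `μ`. -/
def candList (μ : YoungDiagram) : List (ℕ × ℕ) :=
  (gridList (μ.card + 2)).filter fun b => decide (isCandidate μ b)

/-- The primitive idempotent `E_{(Λ_1,…,Λ_r)}`, defined recursively by `E = 1` for `r = 0`
and `E_T = E_U ∏_a (x_r - a)/(c_r - a)`, the product over the contents `a` of all boxes
(other than the box of step `r`) which can be added to or removed from `Λ_{r-1}`. -/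
def idem {R : Type*} [Field R] [Algebra R A] (ω : R) (s e : ℕ → A) {n : ℕ}
    (T : UpDownTableau n) : ℕ → A
  | 0 => 1
  | r + 1 =>
    idem ω s e T r *
      (((candList (T.shape r)).filter (fun b => decide (b ≠ T.box (r+1)))).map fun b =>
        (content ω T (r+1) - boxContent ω (T.shape r) b)⁻¹ •
          (jm ω s e (r+1) - algebraMap R A (boxContent ω (T.shape r) b))).prod

/-- `d_k` : the number of steps among the first `len` steps of `T` adding a box
on the diagonal `k`. -/
def dAdd {n : ℕ} (T : UpDownTableau n) (len : ℕ) (k : ℤ) : ℤ :=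
  (((Finset.Icc 1 len).filter fun t =>
    T.add t = true ∧ ((T.box t).2 : ℤ) - ((T.box t).1 : ℤ) = k).card : ℤ)

/-- `d'_k` : the number of steps among the first `len` steps of `T` removing a box
on the diagonal `k`. -/
def dRem {n : ℕ} (T : UpDownTableau n) (len : ℕ) (k : ℤ) : ℤ :=
  (((Finset.Icc 1 len).filter fun t =>
    T.add t = false ∧ ((T.box t).2 : ℤ) - ((T.box t).1 : ℤ) = k).card : ℤ)

/-- `g_k = δ_{k0} + d_{k-1} + d_{k+1} - 2 d_k`. -/
def gAdd {n : ℕ} (T : UpDownTableau n) (len : ℕ) (k : ℤ) : ℤ :=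
  (if k = 0 then 1 else 0) + dAdd T len (k-1) + dAdd T len (k+1) - 2 * dAdd T len k

/-- `g'_k = d'_{k-1} + d'_{k+1} - 2 d'_k`. -/
def gRem {n : ℕ} (T : UpDownTableau n) (len : ℕ) (k : ℤ) : ℤ :=
  dRem T len (k-1) + dRem T len (k+1) - 2 * dRem T len k

/-- The diagonal `j - i` of the box of step `r`. -/
def diagOf {n : ℕ} (T : UpDownTableau n) (r : ℕ) : ℤ :=
  ((T.box r).2 : ℤ) - ((T.box r).1 : ℤ)

/-- The exponent `p_r` of an updown tableau: `p_r = 1 - g_{k_r}` if a box is added on the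
diagonal `k_r` at step `r`, and `p_r = 1 - g'_{k_r}` if a box is removed, where `g, g'`
are computed from the first `r - 1` steps. -/
def pExp {n : ℕ} (T : UpDownTableau n) (r : ℕ) : ℤ :=
  1 - (if T.add r then gAdd T (r-1) (diagOf T r) else gRem T (r-1) (diagOf T r))

/-- The factor `φ(U, T)` in the recursive definition of `f(T)`; the products over all
integers `k` are realized as products over `-r-1 ≤ k ≤ r+1`, which contains the support
of `g` and `g'` (all other factors are equal to 1). -/
def phiStep {n : ℕ} (T : UpDownTableau n) (r : ℕ) : F :=
  if T.add r then
    (∏ k ∈ (Finset.Icc (-(r:ℤ)-1) ((r:ℤ)+1)).erase (diagOf T r),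
      ((diagOf T r - k : ℤ) : F) ^ gAdd T (r-1) k) *
    ∏ k ∈ Finset.Icc (-(r:ℤ)-1) ((r:ℤ)+1),
      (((diagOf T r + k : ℤ) : F) + ωF - 1) ^ gRem T (r-1) k
  else
    (∏ k ∈ (Finset.Icc (-(r:ℤ)-1) ((r:ℤ)+1)).erase (diagOf T r),
      ((k - diagOf T r : ℤ) : F) ^ gRem T (r-1) k) *
    ∏ k ∈ Finset.Icc (-(r:ℤ)-1) ((r:ℤ)+1),
      ((1 : F) - ωF - ((diagOf T r + k : ℤ) : F)) ^ gAdd T (r-1) k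

/-- The scalar `f(T) ∈ ℂ(ω)`, defined recursively by `f(∅) = 1`, `f(T) = f(U) φ(U,T)`. -/
def fT {n : ℕ} (T : UpDownTableau n) : ℕ → F
  | 0 => 1
  | r + 1 => fT T r * phiStep T (r+1)

/-- The hook length of the box `b` in the Young diagram `μ`. -/
def hookLength (μ : YoungDiagram) (b : ℕ × ℕ) : ℕ :=
  (μ.cells.filter fun c => c.1 = b.1 ∧ b.2 < c.2).card +
  (μ.cells.filter fun c => c.2 = b.2 ∧ b.1 < c.1).card + 1

/-- The product of the hook lengths of all boxes of `μ`. -/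
def hookProd (μ : YoungDiagram) : ℕ :=
  ∏ b ∈ μ.cells, hookLength μ b

/-- Polynomials in the variables `u_1, u_2, …` over `F = ℂ(ω)`. -/
abbrev MvP : Type := MvPolynomial ℕ F

/-- The field `F(u_1, u_2, …)` of rational functions in the variables `u_r` over `ℂ(ω)`. -/
abbrev KK : Type := FractionRing MvP

/-- Substituting `u_r = c` into a polynomial in the `u`'s. -/
def substOne (r : ℕ) (c : F) : MvP →ₐ[F] MvP :=
  MvPolynomial.aeval fun t => if t = r then MvPolynomial.C c else MvPolynomial.X t

/-- The variable `u_r` as an element of `KK`. -/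
def uVar (r : ℕ) : KK := algebraMap MvP KK (MvPolynomial.X r)

/-- A constant (an element of `ℂ(ω)`) as an element of `KK`. -/
def cK (x : F) : KK := algebraMap MvP KK (MvPolynomial.C x)

/-- The element `ω` of `KK`. -/
def ωK : KK := cK ωF

/-- `RegK r c f v` : the rational function `f ∈ F(u_1, u_2, …)`, viewed as a rational
function of the variable `u_r`, is regular at `u_r = c`, with value `v` there. -/
def RegK (r : ℕ) (c : F) (f v : KK) : Prop :=
  ∃ p q : MvP, substOne r c q ≠ 0 ∧
    f = algebraMap MvP KK p / algebraMap MvP KK q ∧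
    v = algebraMap MvP KK (substOne r c p) / algebraMap MvP KK (substOne r c q)

/-- The subring of "constants": the subring generated by the `s_i`, `e_i` and the
scalars from `ℂ(ω)` (i.e. the copy of the Brauer algebra `B_n(ω)` inside `B_n(ω) ⊗ KK`). -/
def constSubK [Algebra KK A] (s e : ℕ → A) : Subring A :=
  Subring.closure (Set.range s ∪ Set.range e ∪ Set.range fun x : F => algebraMap KK A (cK x))

/-- `RegStep s e r c a v` : the element `a` of `B ⊗ F(u_1,…,u_n)`, viewed as a rational
function of `u_r`, is regular at `u_r = c` with value `v`: it can be written as a finite sum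
`a = ∑ f_i • b_i` with constant `b_i` and coordinates `f_i` regular at `u_r = c` (denominators
not vanishing at `u_r = c`), whose values at `u_r = c` give `v = ∑ f_i(c) • b_i`. -/
def RegStep [Algebra KK A] (s e : ℕ → A) (r : ℕ) (c : F) (a v : A) : Prop :=
  ∃ (m : ℕ) (f g : Fin m → KK) (b : Fin m → A),
    (∀ i, RegK r c (f i) (g i)) ∧ (∀ i, b i ∈ constSubK s e) ∧
    a = ∑ i, f i • b i ∧ v = ∑ i, g i • b i

end BrauerFusion

namespace BrauerFusion

/-!
Writing `x_j^{(m)} e_{jm} = (ω-1)/2 · e_{jm} + ∑_{r<j} (s_{rm} - e_{rm}) e_{jm}`, the whole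
proof rests on the two absorption identities `s_{rm} e_{jm} = e_{rj} e_{jm}` and
`e_{rm} e_{jm} = s_{rj} e_{jm}` for `r < j < m`, which turn the sum into `-(x_j - (ω-1)/2) e_{jm}`.
For `m = j + 1` they are proved by induction on `j - r`, conjugating by `s_r`, down to the local
relations `s_r s_{r+1} s_r e_{r+1} = e_r e_{r+1}` and `e_{r+1} s_r e_{r+1} = e_{r+1}`; the step
`m → m + 1` conjugates everything by `s_m`, which commutes with `s_{rj}` and `e_{rj}`.
-/

section Ring

variable {A : Type*} [Ring A]

lemma conj_mul_eq_conj_mul {u a b c : A} (hb : Commute u b) (h : a * b = c * b) :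
    u * a * u * b = u * c * u * b := by
  simp only [mul_assoc, hb.eq]
  rw [← mul_assoc a, h, mul_assoc]

lemma conj_mul_conj_eq_mul_conj {u a b c : A} (hu : u * u = 1) (hc : Commute u c)
    (h : a * b = c * b) : u * a * u * (u * b * u) = c * (u * b * u) :=
  calc u * a * u * (u * b * u) = u * (a * b) * u := by
        simp only [mul_assoc]; rw [← mul_assoc u u, hu, one_mul]
    _ = c * (u * b * u) := by
        rw [h, ← mul_assoc, hc.eq]; simp only [mul_assoc]

lemma sij_succ_self (s : ℕ → A) (i : ℕ) : sij s i (i + 1) = s i := by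
  rw [sij]; simp

lemma sij_of_succ_lt (s : ℕ → A) {i j : ℕ} (h : i + 1 < j) :
    sij s i j = s i * sij s (i + 1) j * s i := by
  rw [sij, dif_pos h]

lemma eij_succ_self (s e : ℕ → A) (i : ℕ) : eij s e i (i + 1) = e i := by
  simp [eij]

lemma eij_of_succ_lt (s e : ℕ → A) {i j : ℕ} (h : i + 1 < j) :
    eij s e i j = sij s i (j - 1) * e (j - 1) * sij s i (j - 1) := by
  simp [eij, h]

lemma eij_succ_succ (s e : ℕ → A) (i : ℕ) :
    eij s e i (i + 1 + 1) = s i * e (i + 1) * s i := by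
  rw [eij_of_succ_lt s e (by omega)]
  exact congrArg (fun x => x * e (i + 1) * x) (sij_succ_self s i)

end Ring

namespace IsBrauer

variable {R A : Type*} [CommRing R] [Ring A] [Algebra R A] {n : ℕ} {ω : R} {s e : ℕ → A}

lemma s_mul_e_succ (hB : IsBrauer n ω s e) {i : ℕ} (h1 : 1 ≤ i) (h2 : i + 2 ≤ n) :
    s i * e (i + 1) = s (i + 1) * (e i * e (i + 1)) :=
  calc s i * e (i + 1) = s i * (e (i + 1) * e i * e (i + 1)) := by rw [hB.eee₂ i h1 h2]
    _ = s i * e (i + 1) * e i * e (i + 1) := by simp only [mul_assoc]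
    _ = s (i + 1) * (e i * e (i + 1)) := by rw [hB.see i h1 h2, mul_assoc]

lemma s_mul_s_succ_mul_s_mul_e_succ (hB : IsBrauer n ω s e) {i : ℕ} (h1 : 1 ≤ i)
    (h2 : i + 2 ≤ n) : s i * s (i + 1) * s i * e (i + 1) = e i * e (i + 1) := by
  rw [mul_assoc, hB.s_mul_e_succ h1 h2]
  simp only [← mul_assoc]
  rw [mul_assoc (s i), hB.ss (i + 1) (by omega) h2, mul_one, hB.se i h1 (by omega)]

lemma e_succ_mul_s_mul_e_succ (hB : IsBrauer n ω s e) {i : ℕ} (h1 : 1 ≤ i)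
    (h2 : i + 2 ≤ n) : e (i + 1) * s i * e (i + 1) = e (i + 1) :=
  calc e (i + 1) * s i * e (i + 1) = e (i + 1) * e i * (s (i + 1) * e (i + 1)) := by
        rw [← hB.ees i h1 h2, mul_assoc]
    _ = e (i + 1) := by rw [hB.se (i + 1) (by omega) (by omega), hB.eee₂ i h1 h2]

lemma e_mul_e_succ_mul_s (hB : IsBrauer n ω s e) {i : ℕ} (h1 : 1 ≤ i) (h2 : i + 2 ≤ n) :
    e i * e (i + 1) * s i = e i * s (i + 1) :=
  calc e i * e (i + 1) * s i = e i * (e (i + 1) * e i * s (i + 1)) := by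
        rw [hB.ees i h1 h2, mul_assoc]
    _ = e i * s (i + 1) := by simp only [← mul_assoc]; rw [hB.eee₁ i h1 h2]

lemma s_mul_e_succ_mul_s (hB : IsBrauer n ω s e) {i : ℕ} (h1 : 1 ≤ i) (h2 : i + 2 ≤ n) :
    s i * e (i + 1) * s i = s (i + 1) * e i * s (i + 1) :=
  calc s i * e (i + 1) * s i = s (i + 1) * (e i * e (i + 1) * s i) := by
        rw [hB.s_mul_e_succ h1 h2]; simp only [mul_assoc]
    _ = s (i + 1) * e i * s (i + 1) := by rw [hB.e_mul_e_succ_mul_s h1 h2, mul_assoc]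

lemma commute_s_sij (hB : IsBrauer n ω s e) {i j m : ℕ} (h1 : 1 ≤ i) (h2 : m + 1 ≤ n)
    (hij : i < j) (hjm : j < m) : Commute (s m) (sij s i j) := by
  have hi : Commute (s m) (s i) := (hB.ss_comm i m h1 h2 (by omega)).symm
  by_cases h : i + 1 < j
  · rw [sij_of_succ_lt s h]
    exact (hi.mul_right (hB.commute_s_sij (by omega) h2 h hjm)).mul_right hi
  · rwa [show j = i + 1 by omega, sij_succ_self]
termination_by j - i

lemma commute_s_eij (hB : IsBrauer n ω s e) {i j m : ℕ} (h1 : 1 ≤ i) (h2 : m + 1 ≤ n)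
    (hij : i < j) (hjm : j < m) : Commute (s m) (eij s e i j) := by
  by_cases h : i + 1 < j
  · have hs := hB.commute_s_sij h1 h2 (show i < j - 1 by omega) (show j - 1 < m by omega)
    rw [eij_of_succ_lt s e h]
    exact (hs.mul_right (hB.es_comm (j - 1) m (by omega) h2 (by omega))).mul_right hs
  · rw [show j = i + 1 by omega, eij_succ_self]
    exact hB.es_comm i m h1 h2 (by omega)

lemma sij_succ_right (hB : IsBrauer n ω s e) {i j : ℕ} (h1 : 1 ≤ i) (h2 : j + 1 ≤ n)
    (hij : i < j) : sij s i (j + 1) = s j * sij s i j * s j := by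
  by_cases h : i + 1 < j
  · have hc : Commute (s i) (s j) := hB.ss_comm i j h1 h2 h
    rw [sij_of_succ_lt s (show i + 1 < j + 1 by omega), hB.sij_succ_right (by omega) h2 h,
      sij_of_succ_lt s h]
    simp only [mul_assoc]
    rw [hc.left_comm, ← hc.eq]
  · obtain rfl : j = i + 1 := by omega
    rw [sij_of_succ_lt s (by omega), sij_succ_self, sij_succ_self]
    exact hB.braid i h1 h2
termination_by j - i

lemma eij_eq_s_mul_eij_succ_mul_s (hB : IsBrauer n ω s e) {i j : ℕ} (h1 : 1 ≤ i) (h2 : j ≤ n)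
    (hij : i + 1 < j) : eij s e i j = s i * eij s e (i + 1) j * s i := by
  by_cases h : i + 1 + 1 < j
  · have hc : Commute (s i) (e (j - 1)) := hB.se_comm i (j - 1) h1 (by omega) (by omega)
    rw [eij_of_succ_lt s e hij, eij_of_succ_lt s e h,
      sij_of_succ_lt s (show i + 1 < j - 1 by omega)]
    simp only [mul_assoc]
    rw [hc.left_comm, ← mul_assoc (s i) (s i), hB.ss i h1 (by omega), one_mul]
  · obtain rfl : j = i + 1 + 1 := by omega
    rw [eij_succ_succ, eij_succ_self]

lemma eij_succ_right (hB : IsBrauer n ω s e) {i j : ℕ} (h1 : 1 ≤ i) (h2 : j + 1 ≤ n)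
    (hij : i < j) : eij s e i (j + 1) = s j * eij s e i j * s j := by
  by_cases h : i + 1 < j
  · have hc : Commute (s i) (s j) := hB.ss_comm i j h1 h2 h
    rw [hB.eij_eq_s_mul_eij_succ_mul_s h1 (by omega) (by omega),
      hB.eij_succ_right (by omega) h2 h, hB.eij_eq_s_mul_eij_succ_mul_s h1 (by omega) h]
    simp only [mul_assoc]
    rw [hc.left_comm, ← hc.eq]
  · obtain rfl : j = i + 1 := by omega
    rw [eij_succ_succ, eij_succ_self]
    exact hB.s_mul_e_succ_mul_s h1 h2
termination_by j - i

lemma sij_succ_mul_e (hB : IsBrauer n ω s e) {r j : ℕ} (hr : 1 ≤ r) (hrj : r < j)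
    (hjn : j + 1 ≤ n) : sij s r (j + 1) * e j = eij s e r j * e j := by
  by_cases h : r + 1 < j
  · rw [sij_of_succ_lt s (show r + 1 < j + 1 by omega),
      hB.eij_eq_s_mul_eij_succ_mul_s hr (by omega) h]
    exact conj_mul_eq_conj_mul (hB.se_comm r j hr hjn h) (hB.sij_succ_mul_e (by omega) h hjn)
  · obtain rfl : j = r + 1 := by omega
    rw [sij_of_succ_lt s (by omega), sij_succ_self, eij_succ_self]
    exact hB.s_mul_s_succ_mul_s_mul_e_succ hr hjn
termination_by j - r

lemma eij_succ_mul_e (hB : IsBrauer n ω s e) {r j : ℕ} (hr : 1 ≤ r) (hrj : r < j)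
    (hjn : j + 1 ≤ n) : eij s e r (j + 1) * e j = sij s r j * e j := by
  by_cases h : r + 1 < j
  · rw [hB.eij_eq_s_mul_eij_succ_mul_s hr (by omega) (by omega), sij_of_succ_lt s h]
    exact conj_mul_eq_conj_mul (hB.se_comm r j hr hjn h) (hB.eij_succ_mul_e (by omega) h hjn)
  · obtain rfl : j = r + 1 := by omega
    rw [eij_succ_succ, sij_succ_self]
    simpa only [mul_assoc] using congrArg (s r * ·) (hB.e_succ_mul_s_mul_e_succ hr hjn)
termination_by j - r

lemma sij_mul_eij (hB : IsBrauer n ω s e) {r j m : ℕ} (hr : 1 ≤ r) (hrj : r < j)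
    (hjm : j < m) (hmn : m ≤ n) : sij s r m * eij s e j m = eij s e r j * eij s e j m := by
  induction m, hjm using Nat.le_induction with
  | base => rw [eij_succ_self]; exact hB.sij_succ_mul_e hr hrj hmn
  | succ m hjm ih =>
    rw [hB.sij_succ_right hr hmn (by omega), hB.eij_succ_right (by omega) hmn hjm]
    exact conj_mul_conj_eq_mul_conj (hB.ss m (by omega) hmn)
      (hB.commute_s_eij hr hmn hrj hjm) (ih (by omega))

lemma eij_mul_eij (hB : IsBrauer n ω s e) {r j m : ℕ} (hr : 1 ≤ r) (hrj : r < j)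
    (hjm : j < m) (hmn : m ≤ n) : eij s e r m * eij s e j m = sij s r j * eij s e j m := by
  induction m, hjm using Nat.le_induction with
  | base => rw [eij_succ_self]; exact hB.eij_succ_mul_e hr hrj hmn
  | succ m hjm ih =>
    rw [hB.eij_succ_right hr hmn (by omega), hB.eij_succ_right (by omega) hmn hjm]
    exact conj_mul_conj_eq_mul_conj (hB.ss m (by omega) hmn)
      (hB.commute_s_sij hr hmn hrj hjm) (ih (by omega))

end IsBrauer

theorem jmM_mul_eij {R A : Type*} [Field R] [NeZero (2 : R)] [Ring A] [Algebra R A]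
    {n j m : ℕ} {ω : R} {s e : ℕ → A} (hB : IsBrauer n ω s e) (hjm : j < m)
    (hmn : m ≤ n) :
    jmM ω s e j m * eij s e j m = (algebraMap R A (ω - 1) - jm ω s e j) * eij s e j m := by
  have hterm : ∀ r ∈ Finset.Icc 1 (j - 1), (sij s r m - eij s e r m) * eij s e j m
      = -((sij s r j - eij s e r j) * eij s e j m) := by
    intro r hr
    obtain ⟨hr1, hrj⟩ := Finset.mem_Icc.mp hr
    rw [sub_mul, sub_mul, hB.sij_mul_eij hr1 (by omega) hjm hmn,
      hB.eij_mul_eij hr1 (by omega) hjm hmn, neg_sub]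
  have hhalves : algebraMap R A (ω - 1)
      = algebraMap R A ((ω - 1) / 2) + algebraMap R A ((ω - 1) / 2) := by
    rw [← map_add, add_halves]
  rw [jm, jmM, jmM, add_mul, Finset.sum_mul, Finset.sum_congr rfl hterm, Finset.sum_neg_distrib,
    ← Finset.sum_mul, hhalves]
  noncomm_ring

theorem jmM_ejm_general {A : Type*} [Ring A] [Algebra F A]
    (n j m : ℕ) (hjm : j < m) (hmn : m ≤ n)
    (s e : ℕ → A) (hB : IsBrauer n ωF s e) :
    jmM ωF s e j m * eij s e j m
      = (algebraMap F A (ωF - 1) - jm ωF s e j) * eij s e j m :=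
  jmM_mul_eij hB hjm hmn

/-- For `1 < j < m ≤ n`, with `x_j^{(m)} = (ω-1)/2 + ∑_{r=1}^{j-1}(s_{rm} - e_{rm})`,
one has `x_j^{(m)} e_{jm} = (ω - 1 - x_j) e_{jm}` in `B_n(ω)`, where `x_j` is the
Jucys–Murphy element.  This is stated in any algebra over `F = ℂ(ω)` whose elements
`s i`, `e i` satisfy the Brauer relations. -/
theorem jmM_ejm {A : Type*} [Ring A] [Algebra F A]
    (n j m : ℕ) (hj : 1 < j) (hjm : j < m) (hmn : m ≤ n)
    (s e : ℕ → A) (hB : IsBrauer n ωF s e) :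
    jmM ωF s e j m * eij s e j m
      = (algebraMap F A (ωF - 1) - jm ωF s e j) * eij s e j m :=
  jmM_ejm_general n j m hjm hmn s e hB

end BrauerFusion
end
end

section
/- Let u and v be independent indeterminates, and for 1 ≤ a < b ≤ 3 and a nonzero rational expression w define R_{ab}(w) = 1 − s_{ab}/w + e_{ab}/(w − ω/2 + 1) in B_3(ω) ⊗_F F(u,v). Then the Yang–Baxter equation holds: R_{12}(u) · R_{13}(u+v) · R_{23}(v) = R_{23}(v) · R_{13}(u+v) · R_{12}(u). -/
/-!
Common definitions for the fusion procedure for the Brauer algebra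
(Isaev–Molev, "Fusion procedure for the Brauer algebra").
-/

noncomputable section
open scoped BigOperators
open Classical

namespace BrauerFusion

/-- The `R`-matrix `R_{ab}(w) = 1 - s_{ab}/w + e_{ab}/(w - ω/2 + 1)`. -/
def Rmat {K : Type*} [Field K] {A : Type*} [Ring A] [Algebra K A]
    (ω : K) (s e : ℕ → A) (a b : ℕ) (w : K) : A :=
  1 - w⁻¹ • sij s a b + (w - ω / 2 + 1)⁻¹ • eij s e a b

/-! With `κ = ω/2 - 1`, the `R`-matrix is `R(w) = (w (w - κ))⁻¹ (w (w - κ) - (w - κ) s + w e)`,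
so the Yang–Baxter equation reduces to an identity between products of three polynomial
`R`-matrices. Expanded, both sides are combinations of words of length at most five in
`s₁, s₂, e₁, e₂`; orienting the defining relations of `B_3`, together with a few consequences
of them, as rewrite rules brings every such word to a normal form, and the two sides then agree
coefficientwise once `ω` is replaced by `2κ + 2`. -/

theorem sij_succ {A : Type*} [Ring A] (s : ℕ → A) (i : ℕ) : sij s i (i + 1) = s i := by
  rw [sij, dif_neg (lt_irrefl _)]

theorem sij_add_two {A : Type*} [Ring A] (s : ℕ → A) (i : ℕ) :
    sij s i (i + 2) = s i * s (i + 1) * s i := by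
  rw [sij, dif_pos (by omega), sij_succ]

theorem eij_succ {A : Type*} [Ring A] (s e : ℕ → A) (i : ℕ) : eij s e i (i + 1) = e i := by
  rw [eij, if_neg (lt_irrefl _)]

theorem eij_add_two {A : Type*} [Ring A] (s e : ℕ → A) (i : ℕ) :
    eij s e i (i + 2) = s i * e (i + 1) * s i := by
  rw [eij, if_pos (by omega), show i + 2 - 1 = i + 1 by omega, sij_succ]

def RmatNum {R A : Type*} [CommRing R] [Ring A] [Algebra R A]
    (κ : R) (s e : ℕ → A) (a b : ℕ) (w : R) : A :=
  (w * (w - κ)) • 1 - (w - κ) • sij s a b + w • eij s e a b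

theorem Rmat_eq_smul_RmatNum {K A : Type*} [Field K] [Ring A] [Algebra K A]
    (ω : K) (s e : ℕ → A) (a b : ℕ) {w : K} (hw : w ≠ 0) (hw' : w - ω / 2 + 1 ≠ 0) :
    Rmat ω s e a b w = (w * (w - ω / 2 + 1))⁻¹ • RmatNum (ω / 2 - 1) s e a b w := by
  have hsub : w - (ω / 2 - 1) = w - ω / 2 + 1 := by ring
  have hS : (w * (w - ω / 2 + 1))⁻¹ * (w - ω / 2 + 1) = w⁻¹ := by field_simp
  have hE : (w * (w - ω / 2 + 1))⁻¹ * w = (w - ω / 2 + 1)⁻¹ := by field_simp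
  rw [RmatNum, hsub, smul_add, smul_sub, smul_smul, smul_smul, smul_smul,
    inv_mul_cancel₀ (mul_ne_zero hw hw'), one_smul, hS, hE, Rmat]

section Brauer3

variable {R A : Type*} [CommRing R] [Ring A] [Algebra R A] {ω : R} {s e : ℕ → A}

namespace IsBrauer

/- The relations of `B_3` with a trailing factor `X`, so that they rewrite inside
right-associated products. -/
variable (hB : IsBrauer 3 ω s e) (X : A)
include hB

theorem s1_mul_s1_mul : s 1 * (s 1 * X) = X := by
  rw [← mul_assoc, hB.ss 1 le_rfl (by norm_num), one_mul]

theorem s2_mul_s2_mul : s 2 * (s 2 * X) = X := by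
  rw [← mul_assoc, hB.ss 2 (by norm_num) le_rfl, one_mul]

theorem s1_mul_e1_mul : s 1 * (e 1 * X) = e 1 * X := by
  rw [← mul_assoc, hB.se 1 le_rfl (by norm_num)]

theorem e1_mul_s1_mul : e 1 * (s 1 * X) = e 1 * X := by
  rw [← mul_assoc, hB.es 1 le_rfl (by norm_num)]

theorem s2_mul_e2_mul : s 2 * (e 2 * X) = e 2 * X := by
  rw [← mul_assoc, hB.se 2 (by norm_num) le_rfl]

theorem e2_mul_s2_mul : e 2 * (s 2 * X) = e 2 * X := by
  rw [← mul_assoc, hB.es 2 (by norm_num) le_rfl]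

theorem e1_mul_e1_mul : e 1 * (e 1 * X) = ω • (e 1 * X) := by
  rw [← mul_assoc, hB.ee 1 le_rfl (by norm_num), smul_mul_assoc]

theorem e2_mul_e2_mul : e 2 * (e 2 * X) = ω • (e 2 * X) := by
  rw [← mul_assoc, hB.ee 2 (by norm_num) le_rfl, smul_mul_assoc]

theorem s2_mul_s1_mul_s2_mul : s 2 * (s 1 * (s 2 * X)) = s 1 * (s 2 * (s 1 * X)) := by
  simpa only [mul_assoc] using congrArg (· * X) (hB.braid 1 le_rfl le_rfl).symm

theorem e1_mul_e2_mul_e1_mul : e 1 * (e 2 * (e 1 * X)) = e 1 * X := by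
  simpa only [mul_assoc] using congrArg (· * X) (hB.eee₁ 1 le_rfl le_rfl)

theorem e2_mul_e1_mul_e2_mul : e 2 * (e 1 * (e 2 * X)) = e 2 * X := by
  simpa only [mul_assoc] using congrArg (· * X) (hB.eee₂ 1 le_rfl le_rfl)

theorem s1_mul_e2_mul_e1_mul : s 1 * (e 2 * (e 1 * X)) = s 2 * (e 1 * X) := by
  simpa only [mul_assoc] using congrArg (· * X) (hB.see 1 le_rfl le_rfl)

theorem e2_mul_e1_mul_s2_mul : e 2 * (e 1 * (s 2 * X)) = e 2 * (s 1 * X) := by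
  simpa only [mul_assoc] using congrArg (· * X) (hB.ees 1 le_rfl le_rfl)

theorem e1_mul_e2_mul_s1_mul : e 1 * (e 2 * (s 1 * X)) = e 1 * (s 2 * X) := by
  rw [← hB.e2_mul_e1_mul_s2_mul, hB.e1_mul_e2_mul_e1_mul]

theorem s2_mul_e1_mul_e2_mul : s 2 * (e 1 * (e 2 * X)) = s 1 * (e 2 * X) := by
  rw [← hB.s1_mul_e2_mul_e1_mul, hB.e2_mul_e1_mul_e2_mul]

theorem e1_mul_s2_mul_e1_mul : e 1 * (s 2 * (e 1 * X)) = e 1 * X := by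
  rw [← hB.e1_mul_e2_mul_s1_mul, hB.s1_mul_e1_mul, hB.e1_mul_e2_mul_e1_mul]

theorem e2_mul_s1_mul_e2_mul : e 2 * (s 1 * (e 2 * X)) = e 2 * X := by
  rw [← hB.e2_mul_e1_mul_s2_mul, hB.s2_mul_e2_mul, hB.e2_mul_e1_mul_e2_mul]

theorem s2_mul_s1_mul_e2_mul : s 2 * (s 1 * (e 2 * X)) = e 1 * (e 2 * X) := by
  rw [← hB.s2_mul_e1_mul_e2_mul, hB.s2_mul_s2_mul]

theorem s1_mul_s2_mul_e1_mul : s 1 * (s 2 * (e 1 * X)) = e 2 * (e 1 * X) := by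
  rw [← hB.s1_mul_e2_mul_e1_mul, hB.s1_mul_s1_mul]

theorem e2_mul_s1_mul_s2_mul : e 2 * (s 1 * (s 2 * X)) = e 2 * (e 1 * X) := by
  rw [← hB.e2_mul_e1_mul_s2_mul, hB.s2_mul_s2_mul]

theorem e1_mul_s2_mul_s1_mul : e 1 * (s 2 * (s 1 * X)) = e 1 * (e 2 * X) := by
  rw [← hB.e1_mul_e2_mul_s1_mul, hB.s1_mul_s1_mul]

end IsBrauer

theorem IsBrauer.yangBaxter_RmatNum (hB : IsBrauer 3 ω s e) {κ : R} (hω : ω = 2 * κ + 2)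
    (u v : R) :
    RmatNum κ s e 1 2 u * RmatNum κ s e 1 3 (u + v) * RmatNum κ s e 2 3 v =
    RmatNum κ s e 2 3 v * RmatNum κ s e 1 3 (u + v) * RmatNum κ s e 1 2 u := by
  subst hω
  suffices ∀ X : A,
      RmatNum κ s e 1 2 u * (RmatNum κ s e 1 3 (u + v) * (RmatNum κ s e 2 3 v * X)) =
      RmatNum κ s e 2 3 v * (RmatNum κ s e 1 3 (u + v) * (RmatNum κ s e 1 2 u * X)) by
    simpa only [mul_assoc, mul_one] using this 1
  intro X
  simp only [RmatNum, sij_succ s 1, sij_succ s 2, sij_add_two s 1, eij_succ s e 1,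
    eij_succ s e 2, eij_add_two s e 1]
  simp only [mul_add, add_mul, mul_sub, sub_mul, smul_mul_assoc, mul_smul_comm, smul_smul,
    one_mul, mul_assoc, hB.s1_mul_s1_mul, hB.s2_mul_s2_mul, hB.s1_mul_e1_mul, hB.e1_mul_s1_mul,
    hB.s2_mul_e2_mul, hB.e2_mul_s2_mul, hB.e1_mul_e1_mul, hB.e2_mul_e2_mul,
    hB.s2_mul_s1_mul_s2_mul, hB.s1_mul_e2_mul_e1_mul, hB.e1_mul_e2_mul_s1_mul,
    hB.e1_mul_s2_mul_e1_mul, hB.e2_mul_s1_mul_e2_mul, hB.s2_mul_s1_mul_e2_mul,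
    hB.s1_mul_s2_mul_e1_mul, hB.e2_mul_s1_mul_s2_mul, hB.e1_mul_s2_mul_s1_mul]
  module

end Brauer3

/-- **The Yang–Baxter equation** for the rational function
`R_{ab}(w) = 1 - s_{ab}/w + e_{ab}/(w - ω/2 + 1)` in `B_3(ω) ⊗ F(u,v)`:
`R_{12}(u) R_{13}(u+v) R_{23}(v) = R_{23}(v) R_{13}(u+v) R_{12}(u)`.
This is stated in any algebra over a field `K ⊇ ℂ(ω)` and any `u, v ∈ K` at which all
the denominators are nonzero (in particular for independent indeterminates `u, v`). -/
theorem yang_baxter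
    {K : Type*} [Field K] [Algebra F K] {A : Type*} [Ring A] [Algebra K A]
    (s e : ℕ → A) (hB : IsBrauer 3 (algebraMap F K ωF) s e)
    (u v : K) (hu : u ≠ 0) (hv : v ≠ 0) (huv : u + v ≠ 0)
    (hu' : u - algebraMap F K ωF / 2 + 1 ≠ 0)
    (hv' : v - algebraMap F K ωF / 2 + 1 ≠ 0)
    (huv' : u + v - algebraMap F K ωF / 2 + 1 ≠ 0) :
    Rmat (algebraMap F K ωF) s e 1 2 u *
    Rmat (algebraMap F K ωF) s e 1 3 (u + v) *
    Rmat (algebraMap F K ωF) s e 2 3 v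
    =
    Rmat (algebraMap F K ωF) s e 2 3 v *
    Rmat (algebraMap F K ωF) s e 1 3 (u + v) *
    Rmat (algebraMap F K ωF) s e 1 2 u := by
  have : CharZero K := charZero_of_injective_algebraMap (algebraMap F K).injective
  set ω := algebraMap F K ωF
  have hω : ω = 2 * (ω / 2 - 1) + 2 := by ring
  rw [Rmat_eq_smul_RmatNum ω s e 1 2 hu hu', Rmat_eq_smul_RmatNum ω s e 1 3 huv huv',
    Rmat_eq_smul_RmatNum ω s e 2 3 hv hv']
  simp only [smul_mul_smul_comm]
  rw [hB.yangBaxter_RmatNum hω u v]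
  congr 1
  ring

end BrauerFusion
end
end
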